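/- arXiv:1806.06810 — 2 statements merged into one kernel-verified Lean document; each statement's English description precedes it below -/
import Mathlib

section
/- Let H be a finite group of unimodular d×d matrices and c an appropriate center. Let m_0 be an H-symmetric trigonometric polynomial with respect to c and G any trigonometric polynomial. If D^β(m_0(ξ) conj(G(ξ)))|_{ξ=0} = 0 for all multi-indices β with 0 < |β| < n, then for every E ∈ H, D^β(m_0(ξ) conj(G(E*ξ) e^{2πi(c−Ec,ξ)}))|_{ξ=0} = 0 for all 0 < |β| < n. -/
open Matrix BigOperators

def matR {d : ℕ} (A : Matrix (Fin d) (Fin d) ℤ) : Matrix (Fin d) (Fin d) ℝ :=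
  A.map Int.cast

def intc {d : ℕ} (k : Fin d → ℤ) : Fin d → ℝ := fun i => (k i : ℝ)

noncomputable def e2pi (x : ℝ) : ℂ := Complex.exp (2 * Real.pi * Complex.I * x)

def dotv {d : ℕ} (x y : Fin d → ℝ) : ℝ := ∑ i, x i * y i

def IsTrigPoly {d : ℕ} (f : (Fin d → ℝ) → ℂ) : Prop :=
  ∃ h : (Fin d → ℤ) →₀ ℂ, ∀ ξ, f ξ = ∑ k ∈ h.support, h k * e2pi (dotv (intc k) ξ)

lemma e2pi_smooth {d : ℕ} (v : Fin d → ℝ) :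
    ContDiff ℝ (⊤ : ℕ∞) (fun ξ : Fin d → ℝ => e2pi (dotv v ξ)) := by
  have hlin : ContDiff ℝ (⊤ : ℕ∞) (fun ξ : Fin d → ℝ => dotv v ξ) := by
    unfold dotv
    exact ContDiff.sum fun i _ => contDiff_const.mul ((ContinuousLinearMap.proj (R := ℝ) (φ := fun _ : Fin d => ℝ) i).contDiff)
  unfold e2pi
  exact Complex.contDiff_exp.comp
    (contDiff_const.mul (Complex.ofRealCLM.contDiff.comp hlin))

lemma trigPoly_smooth {d : ℕ} {f : (Fin d → ℝ) → ℂ} (hf : IsTrigPoly f) :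
    ContDiff ℝ (⊤ : ℕ∞) f := by
  obtain ⟨h, hh⟩ := hf
  have : f = fun ξ => ∑ k ∈ h.support, h k * e2pi (dotv (intc k) ξ) := funext hh
  rw [this]
  exact ContDiff.sum fun k _ => contDiff_const.mul (e2pi_smooth _)

lemma e2pi_mul_conj (x : ℝ) : e2pi x * (starRingEnd ℂ) (e2pi x) = 1 := by
  unfold e2pi
  rw [← Complex.exp_conj, ← Complex.exp_add]
  have : (starRingEnd ℂ) (2 * Real.pi * Complex.I * x) = -(2 * Real.pi * Complex.I * x) := by
    simp only [_root_.map_mul, Complex.conj_I, Complex.conj_ofReal, map_ofNat]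
    ring
  rw [this, add_neg_cancel, Complex.exp_zero]

/-- if `m_0` is `H`-symmetric and all derivatives of order
`0 < |β| < n` of `m_0 · conj G` vanish at `0`, then for every `E ∈ H` all
derivatives of order `0 < |β| < n` of `m_0(ξ) conj(G(E*ξ) e^{2πi(c−Ec,ξ)})`
vanish at `0`. (Vanishing of all partial derivatives of orders `1,…,n−1` is
expressed via iterated Fréchet derivatives.) -/
theorem symmetrized_moment_conditions {d n : ℕ}
    (H : Finset (Matrix (Fin d) (Fin d) ℤ))
    (hmul : ∀ A ∈ H, ∀ B ∈ H, A * B ∈ H)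
    (hone : (1 : Matrix (Fin d) (Fin d) ℤ) ∈ H)
    (hinv : ∀ A ∈ H, ∃ B ∈ H, A * B = 1)
    (huni : ∀ A ∈ H, A.det = 1 ∨ A.det = -1)
    (c : Fin d → ℝ)
    (hc : ∀ E ∈ H, ∃ z : Fin d → ℤ, c - (matR E).mulVec c = intc z)
    (m0 G : (Fin d → ℝ) → ℂ)
    (hm0 : IsTrigPoly m0) (hG : IsTrigPoly G)
    (hsym : ∀ E ∈ H, ∀ ξ : Fin d → ℝ,
      m0 ξ = e2pi (dotv (c - (matR E).mulVec c) ξ) * m0 ((matR E)ᵀ.mulVec ξ))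
    (hvan : ∀ k : ℕ, 0 < k → k < n →
      iteratedFDeriv ℝ k (fun ξ => m0 ξ * (starRingEnd ℂ) (G ξ)) 0 = 0) :
    ∀ E ∈ H, ∀ k : ℕ, 0 < k → k < n →
      iteratedFDeriv ℝ k
        (fun ξ => m0 ξ * (starRingEnd ℂ)
          (G ((matR E)ᵀ.mulVec ξ) * e2pi (dotv (c - (matR E).mulVec c) ξ))) 0 = 0 := by
  intro E hE k hk hkn
  set F : (Fin d → ℝ) → ℂ := fun ξ => m0 ξ * (starRingEnd ℂ) (G ξ) with hF
  -- the linear map ξ ↦ Eᵀ ξ as a continuous linear map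
  set L : (Fin d → ℝ) →L[ℝ] (Fin d → ℝ) :=
    LinearMap.toContinuousLinearMap ((matR E)ᵀ.mulVecLin) with hL
  have hLapp : ∀ ξ, L ξ = (matR E)ᵀ.mulVec ξ := fun ξ => rfl
  have hEq : (fun ξ => m0 ξ * (starRingEnd ℂ)
      (G ((matR E)ᵀ.mulVec ξ) * e2pi (dotv (c - (matR E).mulVec c) ξ))) = F ∘ L := by
    funext ξ
    simp only [Function.comp_apply, hLapp, hF, _root_.map_mul]
    rw [hsym E hE ξ]
    calc e2pi (dotv (c - (matR E).mulVec c) ξ) * m0 ((matR E)ᵀ.mulVec ξ) *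
          ((starRingEnd ℂ) (G ((matR E)ᵀ.mulVec ξ)) *
            (starRingEnd ℂ) (e2pi (dotv (c - (matR E).mulVec c) ξ)))
        = (e2pi (dotv (c - (matR E).mulVec c) ξ) *
            (starRingEnd ℂ) (e2pi (dotv (c - (matR E).mulVec c) ξ))) *
          (m0 ((matR E)ᵀ.mulVec ξ) * (starRingEnd ℂ) (G ((matR E)ᵀ.mulVec ξ))) := by ring
      _ = m0 ((matR E)ᵀ.mulVec ξ) * (starRingEnd ℂ) (G ((matR E)ᵀ.mulVec ξ)) := by
          rw [e2pi_mul_conj]; ring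
  rw [hEq]
  have hFsm : ContDiff ℝ (⊤ : ℕ∞) F := by
    exact (trigPoly_smooth hm0).mul
      (Complex.conjCLE.contDiff.comp (trigPoly_smooth hG))
  rw [L.iteratedFDeriv_comp_right hFsm 0 ((mod_cast le_top))]
  have : L 0 = 0 := map_zero L
  rw [this, hvan k hk hkn]
  ext v
  simp
end

section
/- Let H, M, c be appropriate and n ∈ N. Suppose m_0 is an H-symmetric (center c) trigonometric polynomial with m_0(0) = 1 that obeys the sum rule of order n. Then there exists a trigonometric polynomial m̃_0, H-symmetric with respect to c, with m̃_0(0) = 1 and D^β(1 − m_0(ξ) conj(m̃_0(ξ)))|_{ξ=0} = 0 for all β with |β| < n. -/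
/-!
Averaging over `H` with the phase factors `e2pi ⟪c - E c, ξ⟫` turns any trigonometric
polynomial `G` into an `H`-symmetric one; the phases form a cocycle, so the average is invariant
under reindexing the group. If `m0` is itself `H`-symmetric, the phases cancel in
`1 - m0 · conj (average of G)`, which becomes the average of `1 - m0 · conj G` composed with the
linear maps `ξ ↦ Eᵀ ξ`; these fix `0`, so flatness of `1 - m0 · conj G` at `0` survives the
averaging. Flatness of order `n` is obtained by taking for `conj G` the truncated geometric series
`∑_{j ≤ n} (1 - m0)^j` (the Taylor polynomial of `1 / m0` at `0`), for which
`1 - m0 · conj G = (1 - m0)^(n+1)`.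
-/

open Matrix BigOperators

open scoped ContDiff ComplexConjugate

lemma e2pi_add (a b : ℝ) : e2pi (a + b) = e2pi a * e2pi b := by
  simp only [e2pi, ← Complex.exp_add]; push_cast; ring_nf

lemma e2pi_zero : e2pi 0 = 1 := by simp [e2pi]

lemma conj_e2pi (a : ℝ) : conj (e2pi a) = e2pi (-a) := by
  simp only [e2pi, ← Complex.exp_conj, map_mul, Complex.conj_I, Complex.conj_ofReal, map_ofNat]
  push_cast; ring_nf

lemma e2pi_mul_conj_s12 (a : ℝ) : e2pi a * conj (e2pi a) = 1 := by
  rw [conj_e2pi, ← e2pi_add, add_neg_cancel, e2pi_zero]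

lemma contDiff_e2pi_dotv {d : ℕ} (v : Fin d → ℝ) : ContDiff ℝ ∞ fun ξ => e2pi (dotv v ξ) := by
  have hdot : ContDiff ℝ ∞ fun ξ => dotv v ξ := by unfold dotv; fun_prop
  exact Complex.contDiff_exp.comp (contDiff_const.mul (Complex.ofRealCLM.contDiff.comp hdot))

section TrigPolynomial

variable {d : ℕ}

lemma intc_mulVec (A : Matrix (Fin d) (Fin d) ℤ) (k : Fin d → ℤ) :
    intc (A *ᵥ k) = matR A *ᵥ intc k :=
  funext (RingHom.map_mulVec (Int.castRingHom ℝ) A k)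

lemma dotv_transpose_mulVec (A : Matrix (Fin d) (Fin d) ℝ) (v ξ : Fin d → ℝ) :
    dotv v (Aᵀ *ᵥ ξ) = dotv (A *ᵥ v) ξ := by
  change v ⬝ᵥ (Aᵀ *ᵥ ξ) = (A *ᵥ v) ⬝ᵥ ξ
  rw [dotProduct_mulVec, vecMul_transpose]

noncomputable def trigMonomial (k : Fin d → ℤ) (ξ : Fin d → ℝ) : ℂ := e2pi (dotv (intc k) ξ)

lemma trigMonomial_add (k l : Fin d → ℤ) :
    trigMonomial (k + l) = trigMonomial k * trigMonomial l := by
  ext ξ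
  simp only [trigMonomial, Pi.mul_apply, ← e2pi_add, dotv, intc, Pi.add_apply, Int.cast_add,
    add_mul, Finset.sum_add_distrib]

lemma trigMonomial_zero : trigMonomial (0 : Fin d → ℤ) = 1 := by
  ext ξ; simp [trigMonomial, intc, dotv, e2pi_zero]

noncomputable def trigMonomialHom (d : ℕ) : Multiplicative (Fin d → ℤ) →* ((Fin d → ℝ) → ℂ) where
  toFun k := trigMonomial k.toAdd
  map_one' := trigMonomial_zero
  map_mul' k l := trigMonomial_add k.toAdd l.toAdd

noncomputable def trigPolynomials (d : ℕ) : Subalgebra ℂ ((Fin d → ℝ) → ℂ) :=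
  (AddMonoidAlgebra.lift ℂ _ (Fin d → ℤ) (trigMonomialHom d)).range

lemma mem_trigPolynomials_iff {f : (Fin d → ℝ) → ℂ} :
    f ∈ trigPolynomials d ↔ ∃ h : (Fin d → ℤ) →₀ ℂ, h.sum (fun k a => a • trigMonomial k) = f := by
  simp only [trigPolynomials, AlgHom.mem_range, AddMonoidAlgebra.exists,
    AddMonoidAlgebra.lift_apply]
  rfl

lemma isTrigPoly_iff_mem_trigPolynomials {f : (Fin d → ℝ) → ℂ} :
    IsTrigPoly f ↔ f ∈ trigPolynomials d := by
  simp only [mem_trigPolynomials_iff, IsTrigPoly, funext_iff, Finsupp.sum, Finset.sum_apply]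
  exact exists_congr fun h => forall_congr' fun ξ => eq_comm

lemma trigMonomial_mem_trigPolynomials (k : Fin d → ℤ) : trigMonomial k ∈ trigPolynomials d :=
  mem_trigPolynomials_iff.2 ⟨Finsupp.single k 1, by simp⟩

lemma conj_mem_trigPolynomials {f : (Fin d → ℝ) → ℂ} (hf : f ∈ trigPolynomials d) :
    (fun ξ => conj (f ξ)) ∈ trigPolynomials d := by
  obtain ⟨h, rfl⟩ := mem_trigPolynomials_iff.1 hf
  have : (fun ξ => conj (h.sum (fun k a => a • trigMonomial k) ξ)) =
      h.sum (fun k a => conj a • trigMonomial (-k)) := by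
    ext ξ
    simp [Finsupp.sum, trigMonomial, conj_e2pi, intc, dotv]
  rw [this]
  exact Subalgebra.sum_mem _ fun k _ =>
    Subalgebra.smul_mem _ (trigMonomial_mem_trigPolynomials _) _

lemma comp_transpose_mulVec_mem_trigPolynomials (A : Matrix (Fin d) (Fin d) ℤ)
    {f : (Fin d → ℝ) → ℂ} (hf : f ∈ trigPolynomials d) :
    (fun ξ => f ((matR A)ᵀ *ᵥ ξ)) ∈ trigPolynomials d := by
  obtain ⟨h, rfl⟩ := mem_trigPolynomials_iff.1 hf
  have : (fun ξ => h.sum (fun k a => a • trigMonomial k) ((matR A)ᵀ *ᵥ ξ)) =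
      h.sum (fun k a => a • trigMonomial (A *ᵥ k)) := by
    ext ξ
    simp only [Finsupp.sum, Finset.sum_apply, Pi.smul_apply, trigMonomial, dotv_transpose_mulVec,
      intc_mulVec]
  rw [this]
  exact Subalgebra.sum_mem _ fun k _ =>
    Subalgebra.smul_mem _ (trigMonomial_mem_trigPolynomials _) _

lemma contDiff_of_mem_trigPolynomials {f : (Fin d → ℝ) → ℂ} (hf : f ∈ trigPolynomials d) :
    ContDiff ℝ ∞ f := by
  obtain ⟨h, rfl⟩ := mem_trigPolynomials_iff.1 hf
  simp only [Finsupp.sum, Finset.sum_fn]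
  exact ContDiff.sum fun k _ => (contDiff_e2pi_dotv _).const_smul (h k)

end TrigPolynomial

lemma Finset.sum_comp_mul_left_of_closed {M β : Type*} [Monoid M] [IsDedekindFiniteMonoid M]
    [AddCommMonoid β] {H : Finset M} (hmul : ∀ A ∈ H, ∀ B ∈ H, A * B ∈ H)
    (hinv : ∀ A ∈ H, ∃ B ∈ H, A * B = 1) {E : M} (hE : E ∈ H) (φ : M → β) :
    ∑ F ∈ H, φ (E * F) = ∑ F ∈ H, φ F := by
  obtain ⟨B, hB, hEB⟩ := hinv E hE
  have hBE : B * E = 1 := mul_eq_one_comm.1 hEB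
  exact Finset.sum_nbij' (E * ·) (B * ·) (hmul E hE) (hmul B hB)
    (fun F _ => by simp [← mul_assoc, hBE]) (fun F _ => by simp [← mul_assoc, hEB])
    fun _ _ => rfl

section Symmetrization

variable {d : ℕ}

noncomputable def phase (c : Fin d → ℝ) (E : Matrix (Fin d) (Fin d) ℤ) (ξ : Fin d → ℝ) : ℂ :=
  e2pi (dotv (c - matR E *ᵥ c) ξ)

def IsHSymmetric (H : Finset (Matrix (Fin d) (Fin d) ℤ)) (c : Fin d → ℝ)
    (f : (Fin d → ℝ) → ℂ) : Prop :=
  ∀ E ∈ H, ∀ ξ, f ξ = phase c E ξ * f ((matR E)ᵀ *ᵥ ξ)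

noncomputable def symmetrize (H : Finset (Matrix (Fin d) (Fin d) ℤ)) (c : Fin d → ℝ)
    (G : (Fin d → ℝ) → ℂ) (ξ : Fin d → ℝ) : ℂ :=
  (H.card : ℂ)⁻¹ * ∑ E ∈ H, phase c E ξ * G ((matR E)ᵀ *ᵥ ξ)

lemma matR_mul (A B : Matrix (Fin d) (Fin d) ℤ) : matR (A * B) = matR A * matR B :=
  Matrix.map_mul (f := Int.castRingHom ℝ)

lemma transpose_mulVec_matR_mul (E F : Matrix (Fin d) (Fin d) ℤ) (ξ : Fin d → ℝ) :
    (matR (E * F))ᵀ *ᵥ ξ = (matR F)ᵀ *ᵥ ((matR E)ᵀ *ᵥ ξ) := by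
  rw [mulVec_mulVec, matR_mul, transpose_mul]

lemma phase_mul (c : Fin d → ℝ) (E F : Matrix (Fin d) (Fin d) ℤ) (ξ : Fin d → ℝ) :
    phase c (E * F) ξ = phase c E ξ * phase c F ((matR E)ᵀ *ᵥ ξ) := by
  have hsplit : c - matR (E * F) *ᵥ c = (c - matR E *ᵥ c) + matR E *ᵥ (c - matR F *ᵥ c) := by
    rw [mulVec_sub, mulVec_mulVec, matR_mul]; abel
  rw [phase, phase, phase, dotv_transpose_mulVec, ← e2pi_add, hsplit]
  simp only [dotv, Pi.add_apply, add_mul, Finset.sum_add_distrib]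

lemma isHSymmetric_symmetrize {H : Finset (Matrix (Fin d) (Fin d) ℤ)}
    (hmul : ∀ A ∈ H, ∀ B ∈ H, A * B ∈ H) (hinv : ∀ A ∈ H, ∃ B ∈ H, A * B = 1)
    (c : Fin d → ℝ) (G : (Fin d → ℝ) → ℂ) : IsHSymmetric H c (symmetrize H c G) := by
  intro E hE ξ
  rw [symmetrize, symmetrize, ← Finset.sum_comp_mul_left_of_closed hmul hinv hE]
  simp only [phase_mul, transpose_mulVec_matR_mul, Finset.mul_sum, mul_assoc, mul_left_comm]

lemma symmetrize_zero {H : Finset (Matrix (Fin d) (Fin d) ℤ)} (hH : H.Nonempty)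
    (c : Fin d → ℝ) (G : (Fin d → ℝ) → ℂ) : symmetrize H c G 0 = G 0 := by
  have hcard : (H.card : ℂ) ≠ 0 := by simpa using hH.ne_empty
  simp [symmetrize, phase, dotv, e2pi_zero, hcard]

lemma phase_eq_trigMonomial {c : Fin d → ℝ} {E : Matrix (Fin d) (Fin d) ℤ} {z : Fin d → ℤ}
    (hz : c - matR E *ᵥ c = intc z) : phase c E = trigMonomial z := by
  ext ξ; rw [phase, hz, trigMonomial]

lemma symmetrize_mem_trigPolynomials {H : Finset (Matrix (Fin d) (Fin d) ℤ)} {c : Fin d → ℝ}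
    (hc : ∀ E ∈ H, ∃ z : Fin d → ℤ, c - matR E *ᵥ c = intc z)
    {G : (Fin d → ℝ) → ℂ} (hG : G ∈ trigPolynomials d) :
    symmetrize H c G ∈ trigPolynomials d := by
  have hterm : ∀ E ∈ H, (fun ξ => phase c E ξ * G ((matR E)ᵀ *ᵥ ξ)) ∈ trigPolynomials d := by
    intro E hE
    obtain ⟨z, hz⟩ := hc E hE
    rw [phase_eq_trigMonomial hz]
    exact Subalgebra.mul_mem _ (trigMonomial_mem_trigPolynomials z)
      (comp_transpose_mulVec_mem_trigPolynomials E hG)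
  have : symmetrize H c G =
      (H.card : ℂ)⁻¹ • ∑ E ∈ H, fun ξ => phase c E ξ * G ((matR E)ᵀ *ᵥ ξ) := by
    ext ξ; simp [symmetrize]
  rw [this]
  exact Subalgebra.smul_mem _ (Subalgebra.sum_mem _ hterm) _

lemma one_sub_mul_conj_symmetrize {H : Finset (Matrix (Fin d) (Fin d) ℤ)} (hH : H.Nonempty)
    {c : Fin d → ℝ} {m : (Fin d → ℝ) → ℂ} (hm : IsHSymmetric H c m) (G : (Fin d → ℝ) → ℂ)
    (ξ : Fin d → ℝ) :
    1 - m ξ * conj (symmetrize H c G ξ) =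
      (H.card : ℂ)⁻¹ * ∑ E ∈ H, (1 - m ((matR E)ᵀ *ᵥ ξ) * conj (G ((matR E)ᵀ *ᵥ ξ))) := by
  have hcard : (H.card : ℂ) ≠ 0 := by simpa using hH.ne_empty
  have hterm : ∀ E ∈ H, m ξ * conj (phase c E ξ * G ((matR E)ᵀ *ᵥ ξ)) =
      m ((matR E)ᵀ *ᵥ ξ) * conj (G ((matR E)ᵀ *ᵥ ξ)) := by
    intro E hE
    rw [hm E hE ξ, map_mul, mul_mul_mul_comm, phase, e2pi_mul_conj_s12, one_mul]
  rw [symmetrize, map_mul, map_sum, mul_left_comm, Finset.mul_sum, Finset.sum_congr rfl hterm,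
    Finset.sum_sub_distrib, mul_sub, Finset.sum_const, nsmul_one, map_inv₀, map_natCast,
    inv_mul_cancel₀ hcard]

end Symmetrization

lemma iteratedFDeriv_pow_eq_zero_of_eq_zero {𝕜 E A : Type*} [NontriviallyNormedField 𝕜]
    [NormedAddCommGroup E] [NormedSpace 𝕜 E] [NormedRing A] [NormedAlgebra 𝕜 A]
    {N : WithTop ℕ∞} {u : E → A} (hu : ContDiff 𝕜 N u) {x : E} (hx : u x = 0) {m j : ℕ}
    (hjm : j < m) (hjN : (j : WithTop ℕ∞) ≤ N) :
    iteratedFDeriv 𝕜 j (fun y => u y ^ m) x = 0 := by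
  induction m generalizing j with
  | zero => omega
  | succ m ih =>
    simp_rw [pow_succ']
    refine norm_le_zero_iff.1 ((norm_iteratedFDeriv_mul_le hu (hu.pow m) x hjN).trans_eq ?_)
    refine Finset.sum_eq_zero fun i hi => ?_
    rcases Nat.eq_zero_or_pos i with rfl | hi0
    · simp [norm_iteratedFDeriv_zero, hx]
    · have hjN' : ((j - i : ℕ) : WithTop ℕ∞) ≤ N := le_trans (by exact_mod_cast j.sub_le i) hjN
      simp [ih (by have := Finset.mem_range.1 hi; omega) hjN']

lemma iteratedFDeriv_one_sub_mul_conj_symmetrize_eq_zero {d : ℕ}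
    {H : Finset (Matrix (Fin d) (Fin d) ℤ)} (hH : H.Nonempty) {c : Fin d → ℝ}
    {m : (Fin d → ℝ) → ℂ} (hm : IsHSymmetric H c m) {G : (Fin d → ℝ) → ℂ} {k : ℕ}
    (hsmooth : ContDiff ℝ k fun ξ => 1 - m ξ * conj (G ξ))
    (hflat : iteratedFDeriv ℝ k (fun ξ => 1 - m ξ * conj (G ξ)) 0 = 0) :
    iteratedFDeriv ℝ k (fun ξ => 1 - m ξ * conj (symmetrize H c G ξ)) 0 = 0 := by
  set D : (Fin d → ℝ) → ℂ := fun ξ => 1 - m ξ * conj (G ξ)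
  let L (E : Matrix (Fin d) (Fin d) ℤ) : (Fin d → ℝ) →L[ℝ] (Fin d → ℝ) :=
    LinearMap.toContinuousLinearMap (toLin' (matR E)ᵀ)
  have hdefect : (fun ξ => 1 - m ξ * conj (symmetrize H c G ξ)) =
      (H.card : ℂ)⁻¹ • fun ξ => ∑ E ∈ H, (D ∘ L E) ξ := by
    ext ξ
    simp [one_sub_mul_conj_symmetrize hH hm, D, L]
  have hcomp : ∀ E ∈ H, iteratedFDeriv ℝ k (D ∘ L E) 0 = 0 := fun E _ => by
    rw [(L E).iteratedFDeriv_comp_right hsmooth 0 le_rfl, map_zero, hflat]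
    ext; simp
  have hsum : ContDiff ℝ k fun ξ => ∑ E ∈ H, (D ∘ L E) ξ :=
    ContDiff.sum fun E _ => hsmooth.comp (L E).contDiff
  rw [hdefect, iteratedFDeriv_const_smul_apply hsum.contDiffAt,
    iteratedFDeriv_fun_sum_apply fun E _ => (hsmooth.comp (L E).contDiff).contDiffAt,
    Finset.sum_eq_zero hcomp, smul_zero]

theorem exists_symmetric_dual_mask_general {d n : ℕ}
    (H : Finset (Matrix (Fin d) (Fin d) ℤ))
    (hmul : ∀ A ∈ H, ∀ B ∈ H, A * B ∈ H)
    (hone : (1 : Matrix (Fin d) (Fin d) ℤ) ∈ H)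
    (hinv : ∀ A ∈ H, ∃ B ∈ H, A * B = 1)
    (c : Fin d → ℝ)
    (hc : ∀ E ∈ H, ∃ z : Fin d → ℤ, c - (matR E).mulVec c = intc z)
    (m0 : (Fin d → ℝ) → ℂ) (hm0 : IsTrigPoly m0) (hm0one : m0 0 = 1)
    (hsym : ∀ E ∈ H, ∀ ξ : Fin d → ℝ,
      m0 ξ = e2pi (dotv (c - (matR E).mulVec c) ξ) * m0 ((matR E)ᵀ.mulVec ξ)) :
    ∃ mt0 : (Fin d → ℝ) → ℂ, IsTrigPoly mt0 ∧ mt0 0 = 1 ∧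
      (∀ E ∈ H, ∀ ξ : Fin d → ℝ,
        mt0 ξ = e2pi (dotv (c - (matR E).mulVec c) ξ) * mt0 ((matR E)ᵀ.mulVec ξ)) ∧
      (∀ k : ℕ, k < n →
        iteratedFDeriv ℝ k (fun ξ => 1 - m0 ξ * (starRingEnd ℂ) (mt0 ξ)) 0 = 0) := by
  have hm0T := isTrigPoly_iff_mem_trigPolynomials.1 hm0
  set u : (Fin d → ℝ) → ℂ := 1 - m0
  set G : (Fin d → ℝ) → ℂ := fun ξ => conj ((∑ j ∈ Finset.range (n + 1), u ^ j) ξ)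
  have hG : G ∈ trigPolynomials d := conj_mem_trigPolynomials <| Subalgebra.sum_mem _ fun j _ =>
    Subalgebra.pow_mem _ (Subalgebra.sub_mem _ (Subalgebra.one_mem _) hm0T) j
  have hdefect : (fun ξ => 1 - m0 ξ * conj (G ξ)) = fun ξ => u ξ ^ (n + 1) := by
    ext ξ
    simp only [G, u, Complex.conj_conj, Finset.sum_apply, Pi.pow_apply, Pi.sub_apply, Pi.one_apply]
    linear_combination -mul_neg_geom_sum (1 - m0 ξ) (n + 1)
  have hu : ContDiff ℝ ∞ u := contDiff_const.sub (contDiff_of_mem_trigPolynomials hm0T)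
  refine ⟨symmetrize H c G, isTrigPoly_iff_mem_trigPolynomials.2
    (symmetrize_mem_trigPolynomials hc hG), ?_, isHSymmetric_symmetrize hmul hinv c G,
    fun k hk => iteratedFDeriv_one_sub_mul_conj_symmetrize_eq_zero ⟨1, hone⟩ hsym ?_ ?_⟩
  · simp [symmetrize_zero ⟨1, hone⟩, G, u, hm0one]
  · rw [hdefect]; exact (hu.pow _).of_le (mod_cast le_top)
  · rw [hdefect]
    exact iteratedFDeriv_pow_eq_zero_of_eq_zero hu (by simp [u, hm0one]) (by omega)
      (mod_cast le_top)

/-- Theorem 2 of the paper: for an `H`-symmetric mask `m_0`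
obeying the sum rule of order `n`, there exists an `H`-symmetric dual mask
`m̃_0` with `m̃_0(0) = 1` and `D^β(1 − m_0 conj(m̃_0))(0) = 0` for all `|β| < n`.
(Derivative conditions are expressed via iterated Fréchet derivatives.) -/
theorem exists_symmetric_dual_mask {d n : ℕ}
    (H : Finset (Matrix (Fin d) (Fin d) ℤ))
    (hmul : ∀ A ∈ H, ∀ B ∈ H, A * B ∈ H)
    (hone : (1 : Matrix (Fin d) (Fin d) ℤ) ∈ H)
    (hinv : ∀ A ∈ H, ∃ B ∈ H, A * B = 1)
    (huni : ∀ A ∈ H, A.det = 1 ∨ A.det = -1)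
    (M : Matrix (Fin d) (Fin d) ℤ) (hdet : (matR M).det ≠ 0)
    (happr : ∀ E ∈ H, ∃ E' ∈ H, (matR M)⁻¹ * matR E * matR M = matR E')
    (c : Fin d → ℝ)
    (hc : ∀ E ∈ H, ∃ z : Fin d → ℤ, c - (matR E).mulVec c = intc z)
    (Dstar : Finset (Fin d → ℤ))
    (hDstar : ∀ α : Fin d → ℤ, ∃! q, q ∈ Dstar ∧ ∃ β : Fin d → ℤ, α = Mᵀ.mulVec β + q)
    (m0 : (Fin d → ℝ) → ℂ) (hm0 : IsTrigPoly m0) (hm0one : m0 0 = 1)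
    (hsym : ∀ E ∈ H, ∀ ξ : Fin d → ℝ,
      m0 ξ = e2pi (dotv (c - (matR E).mulVec c) ξ) * m0 ((matR E)ᵀ.mulVec ξ))
    (hsumrule : ∀ s ∈ Dstar, s ≠ 0 → ∀ k : ℕ, k < n →
      iteratedFDeriv ℝ k (fun ξ => m0 (((matR M)ᵀ)⁻¹.mulVec ξ)) (intc s) = 0) :
    ∃ mt0 : (Fin d → ℝ) → ℂ, IsTrigPoly mt0 ∧ mt0 0 = 1 ∧
      (∀ E ∈ H, ∀ ξ : Fin d → ℝ,
        mt0 ξ = e2pi (dotv (c - (matR E).mulVec c) ξ) * mt0 ((matR E)ᵀ.mulVec ξ)) ∧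
      (∀ k : ℕ, k < n →
        iteratedFDeriv ℝ k (fun ξ => 1 - m0 ξ * (starRingEnd ℂ) (mt0 ξ)) 0 = 0) :=
  exists_symmetric_dual_mask_general H hmul hone hinv c hc m0 hm0 hm0one hsym
end
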